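/- arXiv:cond-mat/0111581 — 3 statements merged into one kernel-verified Lean document; each statement's English description precedes it below -/
import Mathlib

section
/- Let N ≥ 1 and let J be a real symmetric N×N matrix with constant row sums j (∑_ν J_{μν} = j for all μ), and let j_max be the largest eigenvalue of J. Then for every vector x ∈ ℝ^N one has ∑_{μ,ν} J_{μν} x_μ x_ν ≤ ((j − j_max)/N)·(∑_μ x_μ)² + j_max·∑_μ x_μ². -/
lemma quad_le_jmax (n : ℕ) (J : Matrix (Fin n) (Fin n) ℝ) (hJ : J.IsHermitian)
    (jmax : ℝ) (h : ∀ i, hJ.eigenvalues i ≤ jmax) (y : EuclideanSpace ℝ (Fin n)) :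
    ∑ μ : Fin n, ∑ ν : Fin n, J μ ν * y μ * y ν ≤ jmax * ∑ i, y i ^ 2 := by
  set b := hJ.eigenvectorBasis with hb
  set c : Fin n → ℝ := fun i => b.repr y i with hc
  have hrep : ∀ k, ∑ i, c i * (b i) k = y k := by
    intro k
    have h0 := congrArg (fun v : EuclideanSpace ℝ (Fin n) => v k) (b.sum_repr y)
    simp only [WithLp.ofLp_sum, Finset.sum_apply] at h0
    simpa using h0
  have hmv : ∀ i μ, ∑ ν, J μ ν * (b i) ν = hJ.eigenvalues i * (b i) μ := by
    intro i μ
    have h0 := congrFun (hJ.mulVec_eigenvectorBasis i) μ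
    simpa [Matrix.mulVec, dotProduct] using h0
  have hinner : ∀ i, ∑ k, (b i) k * y k = c i := by
    intro i
    have h0 := (b.repr_apply_apply y i).symm
    rw [PiLp.inner_apply] at h0
    simpa [hc, mul_comm] using h0
  set w : Fin n → ℝ := fun μ => ∑ ν, J μ ν * y ν with hwdef
  have hw : ∀ μ, w μ = ∑ i, (c i * hJ.eigenvalues i) * (b i) μ := by
    intro μ
    calc w μ = ∑ ν, J μ ν * (∑ i, c i * (b i) ν) := by
          simp only [hwdef]
          exact Finset.sum_congr rfl fun ν _ => by rw [hrep ν]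
      _ = ∑ ν, ∑ i, J μ ν * (c i * (b i) ν) := by
          exact Finset.sum_congr rfl fun ν _ => by rw [Finset.mul_sum]
      _ = ∑ i, ∑ ν, J μ ν * (c i * (b i) ν) := Finset.sum_comm
      _ = ∑ i, c i * ∑ ν, J μ ν * (b i) ν := by
          refine Finset.sum_congr rfl fun i _ => ?_
          rw [Finset.mul_sum]
          exact Finset.sum_congr rfl fun ν _ => by ring
      _ = ∑ i, (c i * hJ.eigenvalues i) * (b i) μ := by
          refine Finset.sum_congr rfl fun i _ => ?_
          rw [hmv i μ]; ring
  have hQ : ∑ μ : Fin n, ∑ ν : Fin n, J μ ν * y μ * y ν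
      = ∑ i, hJ.eigenvalues i * c i ^ 2 := by
    calc ∑ μ : Fin n, ∑ ν : Fin n, J μ ν * y μ * y ν = ∑ μ, y μ * w μ := by
          refine Finset.sum_congr rfl fun μ _ => ?_
          simp only [hwdef]
          rw [Finset.mul_sum]
          exact Finset.sum_congr rfl fun ν _ => by ring
      _ = ∑ μ, ∑ i, (c i * hJ.eigenvalues i) * ((b i) μ * y μ) := by
          refine Finset.sum_congr rfl fun μ _ => ?_
          rw [hw μ, Finset.mul_sum]
          exact Finset.sum_congr rfl fun i _ => by ring
      _ = ∑ i, ∑ μ, (c i * hJ.eigenvalues i) * ((b i) μ * y μ) := Finset.sum_comm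
      _ = ∑ i, (c i * hJ.eigenvalues i) * ∑ μ, (b i) μ * y μ := by
          exact Finset.sum_congr rfl fun i _ => (Finset.mul_sum _ _ _).symm
      _ = ∑ i, hJ.eigenvalues i * c i ^ 2 := by
          refine Finset.sum_congr rfl fun i _ => ?_
          rw [hinner i]; ring
  have hnorm : ∑ i, c i ^ 2 = ∑ k, y k ^ 2 := by
    have h2 := b.repr.inner_map_map y y
    rw [PiLp.inner_apply, PiLp.inner_apply] at h2
    simpa [sq] using h2
  rw [hQ, ← hnorm, Finset.mul_sum]
  exact Finset.sum_le_sum fun i _ => mul_le_mul_of_nonneg_right (h i) (sq_nonneg _)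

/-- For a real symmetric `N × N` matrix `J` with constant row sums `j`
and largest eigenvalue `jmax`, the quadratic form satisfies, for every `x : ℝ^N`,
`∑ μ ν, J μ ν * x μ * x ν ≤ ((j - jmax)/N) * (∑ μ, x μ)^2 + jmax * ∑ μ, (x μ)^2`. -/
theorem quadratic_form_upper_bound
    (N : ℕ) (hN : 1 ≤ N)
    (J : Matrix (Fin N) (Fin N) ℝ) (hJ : J.IsHermitian)
    (j : ℝ) (hrow : ∀ μ : Fin N, ∑ ν : Fin N, J μ ν = j)
    (jmax : ℝ) (hjmax : jmax = ⨆ i : Fin N, hJ.eigenvalues i)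
    (x : Fin N → ℝ) :
    ∑ μ : Fin N, ∑ ν : Fin N, J μ ν * x μ * x ν ≤
      ((j - jmax) / (N : ℝ)) * (∑ μ : Fin N, x μ) ^ 2 + jmax * ∑ μ : Fin N, (x μ) ^ 2 := by
  have hNpos : (0 : ℝ) < N := by exact_mod_cast hN
  have hNne : (N : ℝ) ≠ 0 := ne_of_gt hNpos
  have hEig : ∀ i, hJ.eigenvalues i ≤ jmax := by
    intro i
    rw [hjmax]
    have : Nonempty (Fin N) := ⟨⟨0, hN⟩⟩
    exact le_ciSup (Set.Finite.bddAbove (Set.finite_range _)) i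
  have hcol : ∀ ν : Fin N, ∑ μ : Fin N, J μ ν = j := by
    intro ν
    rw [← hrow ν]
    congr 1; funext μ
    have := hJ.apply ν μ
    simpa using this
  set s : ℝ := ∑ μ : Fin N, x μ with hs
  set cc : ℝ := s / N with hcc
  set y : Fin N → ℝ := fun μ => x μ - cc with hy
  have hysum : ∑ μ : Fin N, y μ = 0 := by
    simp only [hy, Finset.sum_sub_distrib, Finset.sum_const, Finset.card_univ,
      Fintype.card_fin, nsmul_eq_mul]
    rw [← hs, hcc]
    field_simp
    ring
  have hy2 : ∑ μ : Fin N, y μ ^ 2 = (∑ μ : Fin N, x μ ^ 2) - cc * s := by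
    have h1 : ∀ μ, y μ ^ 2 = x μ ^ 2 - 2 * cc * x μ + cc ^ 2 := by intro μ; simp [hy]; ring
    simp only [h1, Finset.sum_add_distrib, Finset.sum_sub_distrib, ← Finset.mul_sum,
      Finset.sum_const, Finset.card_univ, Fintype.card_fin, nsmul_eq_mul, ← hs]
    have h2 : (N : ℝ) * cc ^ 2 = cc * s := by rw [hcc]; field_simp
    rw [h2]; ring
  have hsplit : ∑ μ : Fin N, ∑ ν : Fin N, J μ ν * x μ * x ν
      = (∑ μ : Fin N, ∑ ν : Fin N, J μ ν * y μ * y ν) + j * cc * s := by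
    have hterm : ∀ μ ν, J μ ν * x μ * x ν
        = J μ ν * y μ * y ν + cc * (y μ * J μ ν) + cc * (J μ ν * y ν) + cc * cc * J μ ν := by
      intro μ ν
      have hx : x μ = y μ + cc := by simp [hy]
      have hx' : x ν = y ν + cc := by simp [hy]
      rw [hx, hx']; ring
    simp only [hterm, Finset.sum_add_distrib]
    have e1 : ∑ μ : Fin N, ∑ ν : Fin N, cc * (y μ * J μ ν) = 0 := by
      simp only [← Finset.mul_sum]
      simp only [hrow]
      rw [show (∑ μ : Fin N, y μ * j) = (∑ μ : Fin N, y μ) * j from Finset.sum_mul .. |>.symm]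
      rw [hysum]; ring
    have e2 : ∑ μ : Fin N, ∑ ν : Fin N, cc * (J μ ν * y ν) = 0 := by
      rw [Finset.sum_comm]
      simp only [← Finset.mul_sum]
      have h3 : ∀ ν, ∑ μ : Fin N, J μ ν * y ν = j * y ν := by
        intro ν; rw [← Finset.sum_mul, hcol]
      simp only [h3, ← Finset.mul_sum]
      rw [hysum]; ring
    have e3 : ∑ μ : Fin N, ∑ ν : Fin N, cc * cc * J μ ν = j * cc * s := by
      simp only [← Finset.mul_sum, hrow, Finset.sum_const, Finset.card_univ,
        Fintype.card_fin, nsmul_eq_mul]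
      rw [hcc]; field_simp
    rw [e1, e2, e3]; ring
  have hQy : ∑ μ : Fin N, ∑ ν : Fin N, J μ ν * y μ * y ν ≤ jmax * ∑ μ : Fin N, y μ ^ 2 :=
    quad_le_jmax N J hJ jmax hEig (WithLp.toLp 2 y)
  have hfin : ((j - jmax) / (N : ℝ)) * s ^ 2 = (j - jmax) * (cc * s) := by
    rw [hcc]; ring
  calc ∑ μ : Fin N, ∑ ν : Fin N, J μ ν * x μ * x ν
      = (∑ μ : Fin N, ∑ ν : Fin N, J μ ν * y μ * y ν) + j * cc * s := hsplit
    _ ≤ jmax * (∑ μ : Fin N, y μ ^ 2) + j * cc * s := by linarith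
    _ = jmax * ((∑ μ : Fin N, x μ ^ 2) - cc * s) + j * cc * s := by rw [hy2]
    _ = (j - jmax) * (cc * s) + jmax * ∑ μ : Fin N, x μ ^ 2 := by ring
    _ = ((j - jmax) / (N : ℝ)) * (∑ μ : Fin N, x μ) ^ 2 + jmax * ∑ μ : Fin N, (x μ) ^ 2 := by
        rw [hfin]
end

section
/- Let N ≥ 1, s > 0, and let J be a real symmetric N×N matrix with constant row sums j (∑_ν J_{μν} = j for all μ), with smallest eigenvalue j_min. Then for every family of unit vectors Ω_1, …, Ω_N in ℝ³, the classical Heisenberg energy satisfies s²·∑_{μ,ν} J_{μν} ⟨Ω_μ, Ω_ν⟩ ≥ ((j − j_min)/N)·‖s·∑_μ Ω_μ‖² + j_min·N·s². In particular, the hypothesis E_min^cl(S_cl) ≥ ((j − j_min)/N)·S_cl² + j_min·N·s² of Theorem 1 is fulfilled for every weakly homogeneous coupling matrix J. -/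
open Matrix in
lemma key_rayleigh (N : ℕ) (hN : 1 ≤ N) (J : Matrix (Fin N) (Fin N) ℝ) (hJ : J.IsHermitian)
    (jmin : ℝ) (hjmin : jmin = ⨅ i : Fin N, hJ.eigenvalues i)
    (x : EuclideanSpace ℝ (Fin N)) :
    jmin * ‖x‖ ^ 2 ≤ ∑ μ, ∑ ν, x μ * (J μ ν * x ν) := by
  haveI : Nonempty (Fin N) := ⟨⟨0, hN⟩⟩
  set b := hJ.eigenvectorBasis with hb
  set T := Matrix.toEuclideanLin J with hT
  have hsymm : T.IsSymmetric := Matrix.isHermitian_iff_isSymmetric.1 hJ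
  have hTb : ∀ i, T (b i) = hJ.eigenvalues i • b i := by
    intro i
    apply (WithLp.equiv 2 (Fin N → ℝ)).injective
    simpa [T, Matrix.toEuclideanLin_apply] using hJ.mulVec_eigenvectorBasis i
  have hexp : (inner ℝ x (T x) : ℝ) = ∑ i, hJ.eigenvalues i * (inner ℝ (b i) x : ℝ) ^ 2 := by
    rw [← b.sum_inner_mul_inner x (T x)]
    apply Finset.sum_congr rfl
    intro i _
    rw [← hsymm (b i) x, hTb i, inner_smul_left, real_inner_comm x (b i)]
    simp only [starRingEnd_apply, star_trivial]
    ring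
  have hnorm : ‖x‖ ^ 2 = ∑ i, (inner ℝ (b i) x : ℝ) ^ 2 := by
    rw [← real_inner_self_eq_norm_sq, ← b.sum_inner_mul_inner x x]
    apply Finset.sum_congr rfl
    intro i _
    rw [real_inner_comm x (b i)]; ring
  have hle : ∀ i, jmin ≤ hJ.eigenvalues i := fun i =>
    hjmin ▸ ciInf_le (Finite.bddBelow_range _) i
  have h1 : jmin * ‖x‖ ^ 2 ≤ (inner ℝ x (T x) : ℝ) := by
    rw [hexp, hnorm, Finset.mul_sum]
    exact Finset.sum_le_sum fun i _ => mul_le_mul_of_nonneg_right (hle i) (sq_nonneg _)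
  refine h1.trans_eq ?_
  rw [hT, Matrix.toEuclideanLin_apply]
  rw [EuclideanSpace.inner_eq_star_dotProduct]
  simp [dotProduct, Matrix.mulVec, Finset.mul_sum]
  refine Finset.sum_congr rfl fun _ _ => ?_
  rw [Finset.sum_mul]
  exact Finset.sum_congr rfl fun _ _ => by ring

open Matrix in
lemma key_rayleigh' (N : ℕ) (hN : 1 ≤ N) (J : Matrix (Fin N) (Fin N) ℝ) (hJ : J.IsHermitian)
    (jmin : ℝ) (hjmin : jmin = ⨅ i : Fin N, hJ.eigenvalues i)
    (x : Fin N → ℝ) :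
    jmin * ∑ μ, x μ * x μ ≤ ∑ μ, ∑ ν, x μ * (J μ ν * x ν) := by
  have h := key_rayleigh N hN J hJ jmin hjmin ((WithLp.equiv 2 (Fin N → ℝ)).symm x)
  have hn : ‖(WithLp.equiv 2 (Fin N → ℝ)).symm x‖ ^ 2 = ∑ μ, x μ * x μ := by
    rw [← real_inner_self_eq_norm_sq]
    simp only [PiLp.inner_apply, RCLike.inner_apply, conj_trivial]
    rfl
  rw [hn] at h
  exact h

open Matrix in
lemma Q_lower (N : ℕ) (hN : 1 ≤ N) (J : Matrix (Fin N) (Fin N) ℝ) (hJ : J.IsHermitian)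
    (jmin : ℝ) (hjmin : jmin = ⨅ i : Fin N, hJ.eigenvalues i)
    (y : Fin N → EuclideanSpace ℝ (Fin 3)) :
    jmin * ∑ μ, ‖y μ‖ ^ 2 ≤ ∑ μ, ∑ ν, J μ ν * (inner ℝ (y μ) (y ν) : ℝ) := by
  have hnorm : ∀ μ, ‖y μ‖ ^ 2 = ∑ k, y μ k * y μ k := by
    intro μ
    rw [← real_inner_self_eq_norm_sq]
    simp only [PiLp.inner_apply, RCLike.inner_apply, conj_trivial]
  have hinner : ∀ μ ν, (inner ℝ (y μ) (y ν) : ℝ) = ∑ k, y μ k * y ν k := by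
    intro μ ν
    simp [PiLp.inner_apply, RCLike.inner_apply, mul_comm]
  calc jmin * ∑ μ, ‖y μ‖ ^ 2
      = ∑ k : Fin 3, (jmin * ∑ μ, y μ k * y μ k) := by
        simp_rw [hnorm]
        rw [Finset.sum_comm, ← Finset.mul_sum]
    _ ≤ ∑ k : Fin 3, ∑ μ, ∑ ν, y μ k * (J μ ν * y ν k) := by
        exact Finset.sum_le_sum fun k _ =>
          key_rayleigh' N hN J hJ jmin hjmin (fun μ => y μ k)
    _ = ∑ μ, ∑ ν, J μ ν * (inner ℝ (y μ) (y ν) : ℝ) := by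
        simp_rw [hinner]
        rw [Finset.sum_comm]
        apply Finset.sum_congr rfl; intro μ _
        rw [Finset.sum_comm]
        apply Finset.sum_congr rfl; intro ν _
        rw [Finset.mul_sum]
        apply Finset.sum_congr rfl; intro k _
        ring


/-- For a real symmetric `N × N` matrix `J` with constant row sums `j`
and smallest eigenvalue `jmin`, and any family of unit vectors `Ω μ` in `ℝ³`
(classical spins of length `s > 0`), the classical Heisenberg energy satisfies
`s² ∑ μ ν, J μ ν ⟨Ω μ, Ω ν⟩ ≥ ((j - jmin)/N) ‖s • ∑ μ, Ω μ‖² + jmin * N * s²`,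
i.e. the hypothesis of Theorem 1 is fulfilled for every weakly homogeneous `J`. -/
theorem classical_energy_lower_bound
    (N : ℕ) (hN : 1 ≤ N) (s : ℝ) (hs : 0 < s)
    (J : Matrix (Fin N) (Fin N) ℝ) (hJ : J.IsHermitian)
    (j : ℝ) (hrow : ∀ μ : Fin N, ∑ ν : Fin N, J μ ν = j)
    (jmin : ℝ) (hjmin : jmin = ⨅ i : Fin N, hJ.eigenvalues i)
    (Ω : Fin N → EuclideanSpace ℝ (Fin 3)) (hΩ : ∀ μ : Fin N, ‖Ω μ‖ = 1) :
    s ^ 2 * ∑ μ : Fin N, ∑ ν : Fin N, J μ ν * (inner ℝ (Ω μ) (Ω ν) : ℝ) ≥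
      ((j - jmin) / (N : ℝ)) * ‖s • ∑ μ : Fin N, Ω μ‖ ^ 2 + jmin * (N : ℝ) * s ^ 2 := by
  have hNR : (0 : ℝ) < (N : ℝ) := by exact_mod_cast hN
  have hNne : (N : ℝ) ≠ 0 := ne_of_gt hNR
  set M : EuclideanSpace ℝ (Fin 3) := ∑ μ, Ω μ with hM
  set c : EuclideanSpace ℝ (Fin 3) := ((N : ℝ)⁻¹) • M with hc
  set y : Fin N → EuclideanSpace ℝ (Fin 3) := fun μ => Ω μ - c with hy
  have hcol : ∀ ν : Fin N, ∑ μ : Fin N, J μ ν = j := by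
    intro ν
    have hh : ∀ μ, J μ ν = J ν μ := by
      intro μ
      have := hJ.apply ν μ
      simpa using this
    simp_rw [hh]
    exact hrow ν
  have hsumy : ∑ μ, y μ = 0 := by
    simp only [hy, Finset.sum_sub_distrib, Finset.sum_const, Finset.card_univ,
      Fintype.card_fin, hc, ← hM]
    rw [← Nat.cast_smul_eq_nsmul ℝ, smul_smul, mul_inv_cancel₀ hNne, one_smul, sub_self]
  have hMc : (inner ℝ M c : ℝ) = (N : ℝ)⁻¹ * ‖M‖ ^ 2 := by
    rw [hc, real_inner_smul_right, real_inner_self_eq_norm_sq]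
  have hcc : (inner ℝ c c : ℝ) = (N : ℝ)⁻¹ * ((N : ℝ)⁻¹ * ‖M‖ ^ 2) := by
    rw [hc, real_inner_smul_left, hMc]
  have hΩy : ∀ μ, Ω μ = y μ + c := by intro μ; simp [hy]
  have expand : ∀ μ ν : Fin N, (inner ℝ (Ω μ) (Ω ν) : ℝ)
      = (inner ℝ (y μ) (y ν) : ℝ) + ((inner ℝ (y μ) c : ℝ) + ((inner ℝ c (y ν) : ℝ)
        + (inner ℝ c c : ℝ))) := by
    intro μ ν
    rw [hΩy μ, hΩy ν]
    simp [inner_add_left, inner_add_right]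
    ring
  have T2 : ∑ μ : Fin N, ∑ ν : Fin N, J μ ν * (inner ℝ (y μ) c : ℝ) = 0 := by
    have h1 : ∀ μ, ∑ ν : Fin N, J μ ν * (inner ℝ (y μ) c : ℝ)
        = j * (inner ℝ (y μ) c : ℝ) := by
      intro μ; rw [← Finset.sum_mul, hrow]
    simp_rw [h1]
    rw [← Finset.mul_sum, ← sum_inner, hsumy]
    simp
  have T3 : ∑ μ : Fin N, ∑ ν : Fin N, J μ ν * (inner ℝ c (y ν) : ℝ) = 0 := by
    rw [Finset.sum_comm]
    have h1 : ∀ ν, ∑ μ : Fin N, J μ ν * (inner ℝ c (y ν) : ℝ)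
        = j * (inner ℝ c (y ν) : ℝ) := by
      intro ν; rw [← Finset.sum_mul, hcol]
    simp_rw [h1]
    rw [← Finset.mul_sum, ← inner_sum, hsumy]
    simp
  have T4 : ∑ μ : Fin N, ∑ ν : Fin N, J μ ν * (inner ℝ c c : ℝ)
      = (N : ℝ) * (j * (inner ℝ c c : ℝ)) := by
    have h1 : ∀ μ, ∑ ν : Fin N, J μ ν * (inner ℝ c c : ℝ)
        = j * (inner ℝ c c : ℝ) := by
      intro μ; rw [← Finset.sum_mul, hrow]
    simp_rw [h1]
    rw [Finset.sum_const, Finset.card_univ, Fintype.card_fin, nsmul_eq_mul]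
  have hE : ∑ μ : Fin N, ∑ ν : Fin N, J μ ν * (inner ℝ (Ω μ) (Ω ν) : ℝ)
      = (∑ μ : Fin N, ∑ ν : Fin N, J μ ν * (inner ℝ (y μ) (y ν) : ℝ))
        + j * ((N : ℝ)⁻¹ * ‖M‖ ^ 2) := by
    simp_rw [expand, mul_add, Finset.sum_add_distrib]
    rw [T2, T3, T4, hcc]
    field_simp
    ring
  have hys : ∑ μ : Fin N, ‖y μ‖ ^ 2 = (N : ℝ) - (N : ℝ)⁻¹ * ‖M‖ ^ 2 := by
    have h1 : ∀ μ, ‖y μ‖ ^ 2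
        = ‖Ω μ‖ ^ 2 - 2 * (inner ℝ (Ω μ) c : ℝ) + ‖c‖ ^ 2 := by
      intro μ
      rw [hy]
      exact norm_sub_sq_real (Ω μ) c
    have h2 : ∑ μ : Fin N, (inner ℝ (Ω μ) c : ℝ) = (N : ℝ)⁻¹ * ‖M‖ ^ 2 := by
      rw [← sum_inner, ← hM, hMc]
    have h3 : ‖c‖ ^ 2 = (N : ℝ)⁻¹ * ((N : ℝ)⁻¹ * ‖M‖ ^ 2) := by
      rw [← real_inner_self_eq_norm_sq, hcc]
    simp_rw [h1, hΩ, one_pow]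
    rw [Finset.sum_add_distrib, Finset.sum_sub_distrib, ← Finset.mul_sum, h2,
      Finset.sum_const, Finset.sum_const, Finset.card_univ, Fintype.card_fin,
      nsmul_eq_mul, nsmul_eq_mul, h3]
    field_simp
    ring
  have hQ := Q_lower N hN J hJ jmin hjmin y
  rw [hys] at hQ
  have hEb : jmin * ((N : ℝ) - (N : ℝ)⁻¹ * ‖M‖ ^ 2) + j * ((N : ℝ)⁻¹ * ‖M‖ ^ 2)
      ≤ ∑ μ : Fin N, ∑ ν : Fin N, J μ ν * (inner ℝ (Ω μ) (Ω ν) : ℝ) := by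
    rw [hE]
    linarith
  have hsM : ‖s • M‖ ^ 2 = s ^ 2 * ‖M‖ ^ 2 := by
    rw [norm_smul, Real.norm_eq_abs, abs_of_pos hs, mul_pow]
  rw [ge_iff_le, hsM]
  have hfin : ((j - jmin) / (N : ℝ)) * (s ^ 2 * ‖M‖ ^ 2) + jmin * (N : ℝ) * s ^ 2
      = s ^ 2 * (jmin * ((N : ℝ) - (N : ℝ)⁻¹ * ‖M‖ ^ 2) + j * ((N : ℝ)⁻¹ * ‖M‖ ^ 2)) := by
    field_simp
    ring
  rw [hfin]
  exact mul_le_mul_of_nonneg_left hEb (sq_nonneg s)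
end

section
/- Let N ≥ 1, s > 0, and let J be a real symmetric N×N matrix with constant row sums j (∑_ν J_{μν} = j for all μ), with largest eigenvalue j_max. Then for every family of unit vectors Ω_1, …, Ω_N in ℝ³, the classical Heisenberg energy satisfies s²·∑_{μ,ν} J_{μν} ⟨Ω_μ, Ω_ν⟩ ≤ ((j − j_max)/N)·‖s·∑_μ Ω_μ‖² + j_max·N·s². -/
open Matrix

lemma dp_sum_left {N : ℕ} (f : Fin N → Fin N → ℝ) (w : Fin N → ℝ) :
    (∑ i, f i) ⬝ᵥ w = ∑ i, f i ⬝ᵥ w := by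
  simp only [dotProduct, Finset.sum_apply, Finset.sum_mul]
  exact Finset.sum_comm

lemma dp_sum_right {N : ℕ} (w : Fin N → ℝ) (f : Fin N → Fin N → ℝ) :
    w ⬝ᵥ (∑ i, f i) = ∑ i, w ⬝ᵥ f i := by
  simp only [dotProduct, Finset.sum_apply, Finset.mul_sum]
  exact Finset.sum_comm

lemma dp_smul_smul {N : ℕ} (a d : ℝ) (v w : Fin N → ℝ) :
    (a • v) ⬝ᵥ (d • w) = a * d * (v ⬝ᵥ w) := by
  simp only [dotProduct, Pi.smul_apply, smul_eq_mul, Finset.mul_sum]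
  exact Finset.sum_congr rfl fun μ _ => by ring

lemma dp_smul_left {N : ℕ} (a : ℝ) (v w : Fin N → ℝ) :
    (a • v) ⬝ᵥ w = a * (v ⬝ᵥ w) := by
  simp only [dotProduct, Pi.smul_apply, smul_eq_mul, Finset.mul_sum]
  exact Finset.sum_congr rfl fun μ _ => by ring

lemma dp_smul_right {N : ℕ} (a : ℝ) (v w : Fin N → ℝ) :
    v ⬝ᵥ (a • w) = a * (v ⬝ᵥ w) := by
  simp only [dotProduct, Pi.smul_apply, smul_eq_mul, Finset.mul_sum]
  exact Finset.sum_congr rfl fun μ _ => by ring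

lemma rayleigh_bound (N : ℕ) (hN : 1 ≤ N) (J : Matrix (Fin N) (Fin N) ℝ) (hJ : J.IsHermitian)
    (x : Fin N → ℝ) :
    x ⬝ᵥ (J *ᵥ x) ≤ (⨆ i : Fin N, hJ.eigenvalues i) * (x ⬝ᵥ x) := by
  have : Nonempty (Fin N) := Fin.pos_iff_nonempty.mp hN
  set b := hJ.eigenvectorBasis with hb
  set lam := hJ.eigenvalues with hlam
  set x' : EuclideanSpace ℝ (Fin N) := WithLp.toLp 2 x with hx'
  set c : Fin N → ℝ := fun i => b.repr x' i with hc
  have hsum : x = ∑ i, c i • (b i : Fin N → ℝ) := by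
    have h := b.sum_repr x'
    calc x = (x' : Fin N → ℝ) := rfl
    _ = ((∑ i, c i • b i : EuclideanSpace ℝ (Fin N)) : Fin N → ℝ) := by rw [h]
    _ = ∑ i, c i • (b i : Fin N → ℝ) := by
        ext μ; simp [Finset.sum_apply]
  have hdot : ∀ i k, (b i : Fin N → ℝ) ⬝ᵥ (b k : Fin N → ℝ) = if i = k then 1 else 0 := by
    intro i k
    have h := (orthonormal_iff_ite.mp b.orthonormal) i k
    rw [EuclideanSpace.inner_eq_star_dotProduct] at h
    rw [dotProduct_comm]; simpa using h
  have hJb : ∀ i, J *ᵥ (b i : Fin N → ℝ) = lam i • (b i : Fin N → ℝ) :=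
    hJ.mulVec_eigenvectorBasis
  have hJx : J *ᵥ x = ∑ k, (c k * lam k) • (b k : Fin N → ℝ) := by
    rw [hsum, ← Matrix.mulVecLin_apply, map_sum]
    refine Finset.sum_congr rfl fun k _ => ?_
    rw [_root_.map_smul, Matrix.mulVecLin_apply, hJb, smul_smul]
  have hquad : x ⬝ᵥ (J *ᵥ x) = ∑ i, lam i * (c i)^2 := by
    rw [hJx]
    nth_rewrite 1 [hsum]
    rw [dp_sum_left]
    refine Finset.sum_congr rfl fun i _ => ?_
    rw [dp_sum_right]
    have hterm : ∀ k, (c i • (b i : Fin N → ℝ)) ⬝ᵥ ((c k * lam k) • (b k : Fin N → ℝ))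
        = if i = k then lam i * c i ^ 2 else 0 := by
      intro k
      rw [dp_smul_smul, hdot]
      split_ifs with h
      · subst h; ring
      · ring
    simp_rw [hterm]
    simp
  have hnorm : x ⬝ᵥ x = ∑ i, (c i)^2 := by
    nth_rewrite 1 [hsum]; nth_rewrite 1 [hsum]
    rw [dp_sum_left]
    refine Finset.sum_congr rfl fun i _ => ?_
    rw [dp_sum_right]
    have hterm : ∀ k, (c i • (b i : Fin N → ℝ)) ⬝ᵥ (c k • (b k : Fin N → ℝ))
        = if i = k then c i ^ 2 else 0 := by
      intro k
      rw [dp_smul_smul, hdot]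
      split_ifs with h
      · subst h; ring
      · ring
    simp_rw [hterm]
    simp
  rw [hquad, hnorm, Finset.mul_sum]
  apply Finset.sum_le_sum
  intro i _
  have hle : lam i ≤ ⨆ i, lam i := le_ciSup (Set.Finite.bddAbove (Set.finite_range lam)) i
  nlinarith [sq_nonneg (c i)]

/-- For a real symmetric `N × N` matrix `J` with constant row sums `j`
and largest eigenvalue `jmax`, and any family of unit vectors `Ω μ` in `ℝ³`
(classical spins of length `s > 0`), the classical Heisenberg energy satisfies
`s² ∑ μ ν, J μ ν ⟨Ω μ, Ω ν⟩ ≤ ((j - jmax)/N) ‖s • ∑ μ, Ω μ‖² + jmax * N * s²`. -/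
theorem classical_energy_upper_bound
    (N : ℕ) (hN : 1 ≤ N) (s : ℝ) (hs : 0 < s)
    (J : Matrix (Fin N) (Fin N) ℝ) (hJ : J.IsHermitian)
    (j : ℝ) (hrow : ∀ μ : Fin N, ∑ ν : Fin N, J μ ν = j)
    (jmax : ℝ) (hjmax : jmax = ⨆ i : Fin N, hJ.eigenvalues i)
    (Ω : Fin N → EuclideanSpace ℝ (Fin 3)) (hΩ : ∀ μ : Fin N, ‖Ω μ‖ = 1) :
    s ^ 2 * ∑ μ : Fin N, ∑ ν : Fin N, J μ ν * (inner ℝ (Ω μ) (Ω ν) : ℝ) ≤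
      ((j - jmax) / (N : ℝ)) * ‖s • ∑ μ : Fin N, Ω μ‖ ^ 2 + jmax * (N : ℝ) * s ^ 2 := by
  have hNpos : (0 : ℝ) < N := by exact_mod_cast hN
  -- symmetry of J entrywise
  have hJsymm : ∀ μ ν, J μ ν = J ν μ := by
    intro μ ν
    have := congrFun (congrFun hJ ν) μ
    simpa [Matrix.conjTranspose_apply] using this
  -- the all-ones vector
  set e : Fin N → ℝ := fun _ => 1 with he
  have hJe : J *ᵥ e = j • e := by
    funext μ
    simp [Matrix.mulVec, dotProduct, he, hrow μ]
  have hee : e ⬝ᵥ e = (N : ℝ) := by simp [dotProduct, he]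
  -- symmetry of the quadratic form
  have hsymmdot : ∀ u w : Fin N → ℝ, u ⬝ᵥ (J *ᵥ w) = w ⬝ᵥ (J *ᵥ u) := by
    intro u w
    simp only [dotProduct, Matrix.mulVec, Finset.mul_sum]
    rw [Finset.sum_comm]
    refine Finset.sum_congr rfl fun μ _ => Finset.sum_congr rfl fun ν _ => ?_
    rw [hJsymm ν μ]; ring
  -- the component vectors
  set v : Fin 3 → Fin N → ℝ := fun k μ => Ω μ k with hv
  set c : Fin 3 → ℝ := fun k => ∑ μ, Ω μ k with hcdef
  have hve : ∀ k, v k ⬝ᵥ e = c k := by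
    intro k; simp [dotProduct, he, hv, hcdef]
  -- key per-component bound
  have key : ∀ k, v k ⬝ᵥ (J *ᵥ v k) ≤ (j - jmax) / N * (c k)^2 + jmax * (v k ⬝ᵥ v k) := by
    intro k
    set a : ℝ := c k / N with ha
    set w : Fin N → ℝ := v k - a • e with hw
    have hJw : J *ᵥ w = J *ᵥ v k - (a * j) • e := by
      rw [hw, ← Matrix.mulVecLin_apply, map_sub, _root_.map_smul]
      simp only [Matrix.mulVecLin_apply, hJe, smul_smul]
    have hwe : w ⬝ᵥ e = 0 := by
      rw [hw, sub_dotProduct, dp_smul_left, hve, hee, ha]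
      field_simp
      ring
    have heJv : e ⬝ᵥ (J *ᵥ v k) = j * c k := by
      rw [hsymmdot, hJe, dp_smul_right, hve]
    have hwJw : w ⬝ᵥ (J *ᵥ w) = v k ⬝ᵥ (J *ᵥ v k) - 2 * (a * j) * c k + a^2 * j * N := by
      rw [hJw, hw]
      rw [sub_dotProduct, dotProduct_sub, dotProduct_sub,
        dp_smul_right, dp_smul_left, dp_smul_left, dp_smul_right, hve, hee, heJv]
      ring
    have hww : w ⬝ᵥ w = v k ⬝ᵥ v k - 2 * a * c k + a^2 * N := by
      rw [hw, sub_dotProduct, dotProduct_sub, dotProduct_sub,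
        dp_smul_right, dp_smul_left, dp_smul_smul, hve, hee]
      have : e ⬝ᵥ v k = c k := by
        rw [dotProduct_comm]; exact hve k
      rw [this]; ring
    have hray := rayleigh_bound N hN J hJ w
    rw [← hjmax] at hray
    rw [hwJw, hww] at hray
    have haN : a * N = c k := by rw [ha]; field_simp
    have ha2 : a ^ 2 * N = a * c k := by
      calc a ^ 2 * N = a * (a * N) := by ring
      _ = a * c k := by rw [haN]
    have hgoal : (j - jmax) / N * (c k) ^ 2 = (j - jmax) * (a * c k) := by
      rw [ha]; ring
    rw [hgoal]
    have h1 : jmax * (a ^ 2 * N) = jmax * (a * c k) := by rw [ha2]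
    have h2 : j * (a ^ 2 * N) = j * (a * c k) := by rw [ha2]
    nlinarith [hray, h1, h2]
  -- energy as sum over components
  have hinner : ∀ μ ν, (inner ℝ (Ω μ) (Ω ν) : ℝ) = ∑ k : Fin 3, Ω μ k * Ω ν k := by
    intro μ ν
    simp [PiLp.inner_apply, RCLike.inner_apply, mul_comm]
  have hE : ∑ μ : Fin N, ∑ ν : Fin N, J μ ν * (inner ℝ (Ω μ) (Ω ν) : ℝ)
      = ∑ k : Fin 3, v k ⬝ᵥ (J *ᵥ v k) := by
    calc ∑ μ : Fin N, ∑ ν : Fin N, J μ ν * (inner ℝ (Ω μ) (Ω ν) : ℝ)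
        = ∑ μ : Fin N, ∑ k : Fin 3, ∑ ν : Fin N, J μ ν * (Ω μ k * Ω ν k) := by
          refine Finset.sum_congr rfl fun μ _ => ?_
          rw [show (∑ ν : Fin N, J μ ν * (inner ℝ (Ω μ) (Ω ν) : ℝ))
              = ∑ ν : Fin N, ∑ k : Fin 3, J μ ν * (Ω μ k * Ω ν k) from
            Finset.sum_congr rfl fun ν _ => by rw [hinner, Finset.mul_sum]]
          exact Finset.sum_comm
      _ = ∑ k : Fin 3, ∑ μ : Fin N, ∑ ν : Fin N, J μ ν * (Ω μ k * Ω ν k) :=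
          Finset.sum_comm
      _ = ∑ k : Fin 3, v k ⬝ᵥ (J *ᵥ v k) := by
          refine Finset.sum_congr rfl fun k _ => ?_
          simp only [dotProduct, Matrix.mulVec, hv, Finset.mul_sum]
          exact Finset.sum_congr rfl fun μ _ => Finset.sum_congr rfl fun ν _ => by ring
  -- sum of squared norms of components
  have hn : ∑ k : Fin 3, v k ⬝ᵥ v k = (N : ℝ) := by
    calc ∑ k : Fin 3, v k ⬝ᵥ v k = ∑ k : Fin 3, ∑ μ : Fin N, Ω μ k * Ω μ k := rfl
      _ = ∑ μ : Fin N, ∑ k : Fin 3, Ω μ k * Ω μ k := Finset.sum_comm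
      _ = ∑ μ : Fin N, (1 : ℝ) := by
          refine Finset.sum_congr rfl fun μ _ => ?_
          rw [← hinner μ μ, real_inner_self_eq_norm_sq, hΩ μ]; norm_num
      _ = (N : ℝ) := by simp
  -- norm of the total spin
  have hSk : ∀ k : Fin 3, (∑ μ : Fin N, Ω μ) k = c k := by
    intro k
    rw [hcdef]
    simp
  have hC : ‖(∑ μ : Fin N, Ω μ : EuclideanSpace ℝ (Fin 3))‖ ^ 2 = ∑ k : Fin 3, (c k) ^ 2 := by
    rw [← real_inner_self_eq_norm_sq]
    rw [show (inner ℝ (∑ μ : Fin N, Ω μ) (∑ μ : Fin N, Ω μ) : ℝ)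
        = ∑ k : Fin 3, (∑ μ : Fin N, Ω μ) k * (∑ μ : Fin N, Ω μ) k by
      simp only [PiLp.inner_apply, RCLike.inner_apply, conj_trivial]]
    exact Finset.sum_congr rfl fun k _ => by rw [hSk k]; ring
  have hnormS : ‖s • ∑ μ : Fin N, Ω μ‖ ^ 2 = s ^ 2 * ∑ k : Fin 3, (c k) ^ 2 := by
    rw [norm_smul, mul_pow, Real.norm_eq_abs, sq_abs, hC]
  -- assemble
  have hbound : ∑ k : Fin 3, v k ⬝ᵥ (J *ᵥ v k)
      ≤ (j - jmax) / N * (∑ k : Fin 3, (c k) ^ 2) + jmax * N := by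
    calc ∑ k : Fin 3, v k ⬝ᵥ (J *ᵥ v k)
        ≤ ∑ k : Fin 3, ((j - jmax) / N * (c k) ^ 2 + jmax * (v k ⬝ᵥ v k)) :=
          Finset.sum_le_sum fun k _ => key k
      _ = (j - jmax) / N * (∑ k : Fin 3, (c k) ^ 2) + jmax * ∑ k : Fin 3, v k ⬝ᵥ v k := by
          rw [Finset.sum_add_distrib, Finset.mul_sum, Finset.mul_sum]
      _ = (j - jmax) / N * (∑ k : Fin 3, (c k) ^ 2) + jmax * N := by rw [hn]
  rw [hE, hnormS]
  calc s ^ 2 * ∑ k : Fin 3, v k ⬝ᵥ (J *ᵥ v k)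
      ≤ s ^ 2 * ((j - jmax) / N * (∑ k : Fin 3, (c k) ^ 2) + jmax * N) :=
        mul_le_mul_of_nonneg_left hbound (sq_nonneg s)
    _ = (j - jmax) / N * (s ^ 2 * ∑ k : Fin 3, (c k) ^ 2) + jmax * N * s ^ 2 := by ring
end
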